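/- arXiv:0903.4856 — 7 statements merged into one kernel-verified Lean document; each statement's English description precedes it below -/
import Mathlib

section
/- (KKT necessity) Let Q be an n×n symmetric PSD matrix, A an m×n matrix, c ∈ ℝⁿ, b ∈ ℝᵐ. If x ∈ ℝⁿ is an optimal solution of minimize xᵀQx + cᵀx subject to Ax ≥ b, x ≥ 0, then there exists y ∈ ℝᵐ with y ≥ 0, c - Aᵀy + 2Qx ≥ 0, xᵀ(c - Aᵀy + 2Qx) = 0 and yᵀ(Ax - b) = 0. -/
/-!
Let `g = c + 2Qx` be the gradient of the objective at the optimum `x` (this uses `Qᵀ = Q`).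
If a direction `d` satisfies `(Ad)ᵢ ≥ 0` on the active rows and `dⱼ ≥ 0` on the active
coordinates, then `x + t d` stays feasible for small `t > 0`, and the objective changes by
`t (g ⬝ d) + t² (dᵀQd)`; optimality forces `g ⬝ d ≥ 0`. By Farkas' lemma `g` is then a
nonnegative combination of the active rows of `A` and the active unit vectors; the coefficients
on the rows give `y`, those on the unit vectors give `c - Aᵀy + 2Qx ≥ 0`, and complementary
slackness holds because inactive constraints get coefficient zero.

Farkas' lemma is proved by induction on the generators, eliminating one generator at a time by
projecting onto the hyperplane orthogonal to a separating direction.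
-/

open Matrix Filter Topology

theorem Finset.nonneg_update_and_sum_insert_update_smul {R M κ : Type*} [Semiring R]
    [PartialOrder R] [AddCommMonoid M] [Module R M] [DecidableEq κ] {s : Finset κ} {j : κ}
    (hj : j ∉ s) {y : κ → R} {μ : R} (hy : ∀ i ∈ s, 0 ≤ y i) (hμ : 0 ≤ μ) (a : κ → M) :
    (∀ i ∈ insert j s, 0 ≤ Function.update y j μ i) ∧
      ∑ i ∈ insert j s, Function.update y j μ i • a i = μ • a j + ∑ i ∈ s, y i • a i := by
  refine ⟨(Finset.forall_mem_insert _ _ _).2 ⟨by simpa using hμ, fun i hi => ?_⟩, ?_⟩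
  · rw [Function.update_of_ne (ne_of_mem_of_not_mem hi hj)]
    exact hy i hi
  · rw [Finset.sum_insert hj, Function.update_self]
    congr 1
    exact Finset.sum_congr rfl fun i hi => by
      rw [Function.update_of_ne (ne_of_mem_of_not_mem hi hj)]

section Farkas

variable {𝕜 ι κ : Type*} [Field 𝕜] [Fintype ι]

theorem sub_div_smul_dotProduct (u w d e : ι → 𝕜) :
    (u - (u ⬝ᵥ d / (w ⬝ᵥ d)) • w) ⬝ᵥ e = u ⬝ᵥ (e - (w ⬝ᵥ e / (w ⬝ᵥ d)) • d) := by
  simp only [sub_dotProduct, dotProduct_sub, smul_dotProduct, dotProduct_smul, smul_eq_mul]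
  ring

variable [LinearOrder 𝕜] [IsStrictOrderedRing 𝕜]

theorem exists_nonneg_sum_smul_eq_or_exists_dotProduct_neg (s : Finset κ) (a : κ → ι → 𝕜)
    (g : ι → 𝕜) :
    (∃ y : κ → 𝕜, (∀ i ∈ s, 0 ≤ y i) ∧ ∑ i ∈ s, y i • a i = g) ∨
      ∃ d : ι → 𝕜, (∀ i ∈ s, 0 ≤ a i ⬝ᵥ d) ∧ g ⬝ᵥ d < 0 := by
  classical
  induction s using Finset.induction_on generalizing a g with
  | empty =>
    by_cases hg : g = 0
    · exact .inl ⟨0, by simp, by simp [hg]⟩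
    · have hgg : 0 < g ⬝ᵥ g :=
        (Fintype.sum_nonneg fun i => mul_self_nonneg (g i)).lt_of_ne'
          (dotProduct_self_eq_zero.not.2 hg)
      exact .inr ⟨-g, by simp, by simpa using hgg⟩
  | insert j s hj ih =>
    rcases ih a g with ⟨y, hy, hsum⟩ | ⟨d, hd, hgd⟩
    · obtain ⟨hy', hsum'⟩ := Finset.nonneg_update_and_sum_insert_update_smul hj hy le_rfl a
      exact .inl ⟨_, hy', by rw [hsum', zero_smul, zero_add, hsum]⟩
    set w := a j
    by_cases hwd : 0 ≤ w ⬝ᵥ d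
    · exact .inr ⟨d, (Finset.forall_mem_insert _ _ _).2 ⟨hwd, hd⟩, hgd⟩
    push Not at hwd
    -- Project the other generators and `g` onto `d⊥` along `w`; by `sub_div_smul_dotProduct` a
    -- separating direction `e` of the projected problem yields one of the original problem.
    rcases ih (fun i => a i - (a i ⬝ᵥ d / (w ⬝ᵥ d)) • w) (g - (g ⬝ᵥ d / (w ⬝ᵥ d)) • w) with
      ⟨y, hy, hsum⟩ | ⟨e, he, hge⟩
    · set μ := (g ⬝ᵥ d - ∑ i ∈ s, y i * (a i ⬝ᵥ d)) / (w ⬝ᵥ d)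
      have hμ : 0 ≤ μ := by
        refine div_nonneg_of_nonpos ?_ hwd.le
        have := Finset.sum_nonneg fun i hi => mul_nonneg (hy i hi) (hd i hi)
        linarith
      obtain ⟨hy', hsum'⟩ := Finset.nonneg_update_and_sum_insert_update_smul hj hy hμ a
      refine .inl ⟨_, hy', hsum'.trans ?_⟩
      have hproj : ∑ i ∈ s, y i • (a i - (a i ⬝ᵥ d / (w ⬝ᵥ d)) • w) =
          ∑ i ∈ s, y i • a i - ((∑ i ∈ s, y i * (a i ⬝ᵥ d)) / (w ⬝ᵥ d)) • w := by
        simp only [smul_sub, smul_smul, Finset.sum_sub_distrib, ← Finset.sum_smul, Finset.sum_div,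
          mul_div_assoc]
      rw [hproj] at hsum
      linear_combination (norm := module) hsum
    · refine .inr ⟨e - (w ⬝ᵥ e / (w ⬝ᵥ d)) • d, ?_, ?_⟩
      · refine (Finset.forall_mem_insert _ _ _).2 ⟨?_, fun i hi => ?_⟩
        · rw [← sub_div_smul_dotProduct, div_self hwd.ne, one_smul, sub_self, zero_dotProduct]
        · rw [← sub_div_smul_dotProduct]; exact he i hi
      · rw [← sub_div_smul_dotProduct]; exact hge

theorem exists_nonneg_sum_smul_eq_of_forall_dotProduct_nonneg [Fintype κ] (a : κ → ι → 𝕜)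
    (p : κ → Prop) [DecidablePred p] (g : ι → 𝕜)
    (h : ∀ d : ι → 𝕜, (∀ k, p k → 0 ≤ a k ⬝ᵥ d) → 0 ≤ g ⬝ᵥ d) :
    ∃ y : κ → 𝕜, 0 ≤ y ∧ (∀ k, ¬p k → y k = 0) ∧ ∑ k, y k • a k = g := by
  rcases exists_nonneg_sum_smul_eq_or_exists_dotProduct_neg (Finset.univ.filter p) a g with
    ⟨y, hy, hsum⟩ | ⟨d, hd, hgd⟩
  · refine ⟨fun k => if p k then y k else 0, fun k => ?_, fun k hk => if_neg hk, ?_⟩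
    · dsimp only
      split_ifs with hk
      exacts [hy k (by simpa using hk), le_rfl]
    · simpa only [ite_smul, zero_smul, Finset.sum_filter] using hsum
  · exact absurd (h d fun k hk => hd k (by simpa using hk)) hgd.not_ge

end Farkas

theorem Matrix.IsSymm.quadratic_add_smul {R ι : Type*} [CommRing R] [Fintype ι]
    {Q : Matrix ι ι R} (hQ : Q.IsSymm) (c x d : ι → R) (t : R) :
    (x + t • d) ⬝ᵥ Q *ᵥ (x + t • d) + c ⬝ᵥ (x + t • d) =
      x ⬝ᵥ Q *ᵥ x + c ⬝ᵥ x + t * ((c + 2 • (Q *ᵥ x)) ⬝ᵥ d) + t ^ 2 * (d ⬝ᵥ Q *ᵥ d) := by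
  have hxd : x ⬝ᵥ Q *ᵥ d = (Q *ᵥ x) ⬝ᵥ d := by
    rw [dotProduct_mulVec, ← mulVec_transpose, hQ.eq]
  have hdx : d ⬝ᵥ Q *ᵥ x = (Q *ᵥ x) ⬝ᵥ d := dotProduct_comm _ _
  simp only [mulVec_add, mulVec_smul, dotProduct_add, add_dotProduct, dotProduct_smul,
    smul_dotProduct, smul_eq_mul, hxd, hdx, two_smul]
  ring

theorem eventually_nonneg_add_smul {ι : Type*} [Finite ι] {u v : ι → ℝ} (hu : 0 ≤ u)
    (hv : ∀ i, u i = 0 → 0 ≤ v i) : ∀ᶠ t in 𝓝[>] (0 : ℝ), 0 ≤ u + t • v := by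
  simp only [Pi.le_def, Pi.zero_apply, Pi.add_apply, Pi.smul_apply, smul_eq_mul]
  refine eventually_all.2 fun i => ?_
  rcases (show 0 ≤ u i from hu i).eq_or_lt with hui | hui
  · filter_upwards [eventually_mem_nhdsWithin] with t ht
    rw [← hui, zero_add]
    exact mul_nonneg (le_of_lt ht) (hv i hui.symm)
  · have hcont : Continuous fun t : ℝ => u i + t * v i := by fun_prop
    exact nhdsWithin_le_nhds ((hcont.tendsto' 0 (u i) (by simp)).eventually (lt_mem_nhds hui)
      |>.mono fun t => le_of_lt)

theorem nonneg_of_eventually_nonneg_mul_add_sq_mul {α β : ℝ}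
    (h : ∀ᶠ t in 𝓝[>] (0 : ℝ), 0 ≤ t * α + t ^ 2 * β) : 0 ≤ α := by
  by_contra! hα
  have hcont : Continuous fun t : ℝ => α + t * β := by fun_prop
  have hneg : ∀ᶠ t in 𝓝[>] (0 : ℝ), α + t * β < 0 :=
    nhdsWithin_le_nhds ((hcont.tendsto' 0 α (by simp)).eventually (gt_mem_nhds hα))
  obtain ⟨t, ht, hnonneg, hlt⟩ := (eventually_mem_nhdsWithin.and (h.and hneg)).exists
  have hfactor : t * α + t ^ 2 * β = t * (α + t * β) := by ring
  exact (mul_neg_of_pos_of_neg ht hlt).not_ge (hfactor ▸ hnonneg)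

theorem gradient_dotProduct_nonneg_of_optimal {ι κ : Type*} [Fintype ι] [Fintype κ]
    {Q : Matrix ι ι ℝ} (hQ : Q.IsSymm) {A : Matrix κ ι ℝ} {c x : ι → ℝ} {b : κ → ℝ}
    (hAx : b ≤ A *ᵥ x) (hx : 0 ≤ x)
    (hopt : ∀ x', b ≤ A *ᵥ x' → 0 ≤ x' → x ⬝ᵥ Q *ᵥ x + c ⬝ᵥ x ≤ x' ⬝ᵥ Q *ᵥ x' + c ⬝ᵥ x')
    {d : ι → ℝ} (hdA : ∀ i, (A *ᵥ x) i = b i → 0 ≤ (A *ᵥ d) i) (hdx : ∀ j, x j = 0 → 0 ≤ d j) :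
    0 ≤ (c + 2 • (Q *ᵥ x)) ⬝ᵥ d := by
  refine nonneg_of_eventually_nonneg_mul_add_sq_mul (β := d ⬝ᵥ Q *ᵥ d) ?_
  have hrows := eventually_nonneg_add_smul (sub_nonneg.2 hAx) (v := A *ᵥ d)
    fun i hi => hdA i (sub_eq_zero.1 hi)
  filter_upwards [hrows, eventually_nonneg_add_smul hx hdx] with t hrows hcoords
  have hfeas : b ≤ A *ᵥ (x + t • d) := by
    rw [mulVec_add, mulVec_smul]
    simpa [sub_add_eq_add_sub] using hrows
  have := hopt _ hfeas hcoords
  rw [hQ.quadratic_add_smul] at this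
  linarith

theorem kkt_necessity_general (n m : ℕ) (Q : Matrix (Fin n) (Fin n) ℝ)
    (hQsym : Q.IsSymm)
    (A : Matrix (Fin m) (Fin n) ℝ) (c : Fin n → ℝ) (b : Fin m → ℝ)
    (x : Fin n → ℝ)
    (hfeas1 : ∀ i, b i ≤ (A *ᵥ x) i) (hfeas2 : ∀ i, 0 ≤ x i)
    (hopt : ∀ x' : Fin n → ℝ, (∀ i, b i ≤ (A *ᵥ x') i) → (∀ i, 0 ≤ x' i) →
      x ⬝ᵥ Q *ᵥ x + c ⬝ᵥ x ≤ x' ⬝ᵥ Q *ᵥ x' + c ⬝ᵥ x') :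
    ∃ y : Fin m → ℝ, (∀ i, 0 ≤ y i) ∧
      (∀ i, 0 ≤ (c - Aᵀ *ᵥ y + 2 • (Q *ᵥ x)) i) ∧
      x ⬝ᵥ (c - Aᵀ *ᵥ y + 2 • (Q *ᵥ x)) = 0 ∧
      y ⬝ᵥ (A *ᵥ x - b) = 0 := by
  classical
  -- Farkas' lemma for the rows of `A` and of `1` (the constraints `Ax ≥ b` and `x ≥ 0`),
  -- restricted to those active at `x`.
  obtain ⟨μ, hμ, hμ_active, hμ_sum⟩ := exists_nonneg_sum_smul_eq_of_forall_dotProduct_nonneg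
      (Sum.elim (fun i => A i) fun j => (1 : Matrix (Fin n) (Fin n) ℝ) j)
      (Sum.elim (fun i => (A *ᵥ x) i = b i) fun j => x j = 0) (c + 2 • (Q *ᵥ x))
      fun d hd => gradient_dotProduct_nonneg_of_optimal hQsym hfeas1 hfeas2 hopt
        (fun i => hd (.inl i)) fun j hj => by
          have h : 0 ≤ ((1 : Matrix (Fin n) (Fin n) ℝ) *ᵥ d) j := hd (.inr j) hj
          rwa [one_mulVec] at h
  have hgrad : c - Aᵀ *ᵥ (μ ∘ Sum.inl) + 2 • (Q *ᵥ x) = μ ∘ Sum.inr := by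
    simp only [Fintype.sum_sum_type, Sum.elim_inl, Sum.elim_inr] at hμ_sum
    rw [mulVec_transpose, ← vecMul_one (μ ∘ Sum.inr), vecMul_eq_sum, vecMul_eq_sum]
    simp only [Function.comp_apply]
    linear_combination (norm := module) -hμ_sum
  refine ⟨μ ∘ Sum.inl, fun i => hμ _, hgrad ▸ fun j => hμ _, ?_, ?_⟩
  · rw [hgrad]
    refine Finset.sum_eq_zero fun j _ => ?_
    by_cases hj : x j = 0 <;> simp [hj, hμ_active (.inr j)]
  · refine Finset.sum_eq_zero fun i _ => ?_
    by_cases hi : (A *ᵥ x) i = b i <;> simp [hi, hμ_active (.inl i)]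

theorem kkt_necessity (n m : ℕ) (Q : Matrix (Fin n) (Fin n) ℝ)
    (hQsym : Q.IsSymm) (hQ : ∀ z : Fin n → ℝ, 0 ≤ z ⬝ᵥ Q *ᵥ z)
    (A : Matrix (Fin m) (Fin n) ℝ) (c : Fin n → ℝ) (b : Fin m → ℝ)
    (x : Fin n → ℝ)
    (hfeas1 : ∀ i, b i ≤ (A *ᵥ x) i) (hfeas2 : ∀ i, 0 ≤ x i)
    (hopt : ∀ x' : Fin n → ℝ, (∀ i, b i ≤ (A *ᵥ x') i) → (∀ i, 0 ≤ x' i) →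
      x ⬝ᵥ Q *ᵥ x + c ⬝ᵥ x ≤ x' ⬝ᵥ Q *ᵥ x' + c ⬝ᵥ x') :
    ∃ y : Fin m → ℝ, (∀ i, 0 ≤ y i) ∧
      (∀ i, 0 ≤ (c - Aᵀ *ᵥ y + 2 • (Q *ᵥ x)) i) ∧
      x ⬝ᵥ (c - Aᵀ *ᵥ y + 2 • (Q *ᵥ x)) = 0 ∧
      y ⬝ᵥ (A *ᵥ x - b) = 0 :=
  kkt_necessity_general n m Q hQsym A c b x hfeas1 hfeas2 hopt
end

section
/- Solvability of the QP is equivalent to solvability of the associated LCP: the quadratic program minimize xᵀQx + cᵀx subject to Ax ≥ b, x ≥ 0 (Q symmetric PSD) has an optimal solution if and only if there exist w, z ∈ ℝ^{n+m} with w - Mz = q, w ≥ 0, z ≥ 0, wᵀz = 0, where M = [[2Q, -Aᵀ], [A, 0]] and q = (c, -b). Moreover, in that case the first n components of z form an optimal solution of the QP. -/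
/-!
A minimizer `x` of the convex quadratic `f x = xᵀQx + cᵀx` over `{Ax ≥ b, x ≥ 0}` also minimizes
the linearization `y ↦ (2Qx + c)ᵀy` over that polyhedron (move from `x` slightly towards any
feasible point). LP duality, derived from Farkas' lemma, then gives multipliers `u ≥ 0` with
`v = 2Qx + c - Aᵀu ≥ 0`, `vᵀx = 0` and `uᵀ(Ax - b) = 0`. These KKT conditions say precisely that
`w = (v, Ax - b)`, `z = (x, u)` solve the LCP. Conversely, when `Q` is positive semidefinite the KKT
conditions are sufficient: for feasible `y`,
`f y - f x ≥ (v + Aᵀu)ᵀ(y - x) = vᵀy + uᵀ(Ay - b) ≥ 0`.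
-/

open Matrix

namespace Module.Dual

variable {𝕜 V : Type*} [Field 𝕜] [LinearOrder 𝕜] [IsStrictOrderedRing 𝕜]
  [AddCommGroup V] [Module 𝕜 V]

theorem eq_zero_of_forall_nonneg {f : Dual 𝕜 V} (h : ∀ x, 0 ≤ f x) : f = 0 :=
  LinearMap.ext fun x => le_antisymm (by simpa using h (-x)) (h x)

theorem exists_nonneg_sum_fin_of_forall_nonneg :
    ∀ {k : ℕ} (a : Fin k → Dual 𝕜 V) (f : Dual 𝕜 V),
    (∀ x, (∀ i, 0 ≤ a i x) → 0 ≤ f x) → ∃ μ : Fin k → 𝕜, 0 ≤ μ ∧ f = ∑ i, μ i • a i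
  | 0, a, f, h => ⟨0, le_rfl, by simpa using eq_zero_of_forall_nonneg fun x => h x finZeroElim⟩
  | k + 1, a, f, h => by
    by_cases htail : ∀ x, (∀ i, 0 ≤ a (Fin.succ i) x) → 0 ≤ f x
    · obtain ⟨μ, hμ, rfl⟩ := exists_nonneg_sum_fin_of_forall_nonneg (Fin.tail a) f htail
      exact ⟨Fin.cons 0 μ, fun i => Fin.cases le_rfl hμ i,
        by simp [Fin.sum_univ_succ, Fin.tail]⟩
    push Not at htail
    obtain ⟨x₀, hx₀, hfx₀⟩ := htail
    have ha₀ : a 0 x₀ < 0 := by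
      by_contra! h₀
      exact hfx₀.not_ge (h x₀ (Fin.cases h₀ hx₀))
    -- Bartl's induction step: project along `x₀` onto `ker (a 0)` and eliminate `a 0`.
    let a' : Fin k → Dual 𝕜 V := fun i => a i.succ - (a i.succ x₀ / a 0 x₀) • a 0
    let f' : Dual 𝕜 V := f - (f x₀ / a 0 x₀) • a 0
    have h' : ∀ x, (∀ i, 0 ≤ a' i x) → 0 ≤ f' x := by
      intro x hx
      have key : ∀ g : Dual 𝕜 V, g (x - (a 0 x / a 0 x₀) • x₀) = g x - g x₀ / a 0 x₀ * a 0 x :=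
        fun g => by rw [map_sub, map_smul, smul_eq_mul, div_mul_comm]
      have := h (x - (a 0 x / a 0 x₀) • x₀) <| Fin.cases
        (by rw [key, div_self ha₀.ne, one_mul, sub_self]) fun i => by simpa [key, a'] using hx i
      simpa [key, f'] using this
    obtain ⟨μ, hμ, hf'⟩ := exists_nonneg_sum_fin_of_forall_nonneg a' f' h'
    have hc : 0 ≤ (f x₀ - ∑ i, μ i * a i.succ x₀) / a 0 x₀ := by
      have : 0 ≤ ∑ i, μ i * a i.succ x₀ := Finset.sum_nonneg fun i _ => mul_nonneg (hμ i) (hx₀ i)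
      exact div_nonneg_of_nonpos (by linarith) ha₀.le
    refine ⟨Fin.cons _ μ, fun i => Fin.cases hc hμ i, LinearMap.ext fun x => ?_⟩
    have hx : f x - f x₀ / a 0 x₀ * a 0 x
        = ∑ i, μ i * a i.succ x - ∑ i, μ i * (a i.succ x₀ / a 0 x₀ * a 0 x) := by
      simpa [f', a', mul_sub, Finset.sum_sub_distrib] using congrArg (· x) hf'
    have hsum : ∑ i, μ i * (a i.succ x₀ / a 0 x₀ * a 0 x)
        = (∑ i, μ i * a i.succ x₀) / a 0 x₀ * a 0 x := by
      rw [Finset.sum_div, Finset.sum_mul]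
      exact Finset.sum_congr rfl fun i _ => by ring
    simp only [LinearMap.add_apply, LinearMap.coe_sum, Finset.sum_apply, LinearMap.smul_apply,
      Fin.sum_univ_succ, Fin.cons_zero, Fin.cons_succ, smul_eq_mul, sub_div, sub_mul]
    linarith

variable {ι : Type*} [Fintype ι]

theorem exists_nonneg_sum_of_forall_nonneg (a : ι → Dual 𝕜 V) (f : Dual 𝕜 V)
    (h : ∀ x, (∀ i, 0 ≤ a i x) → 0 ≤ f x) : ∃ μ : ι → 𝕜, 0 ≤ μ ∧ f = ∑ i, μ i • a i := by
  let e := Fintype.equivFin ι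
  obtain ⟨μ, hμ, rfl⟩ := exists_nonneg_sum_fin_of_forall_nonneg (a ∘ e.symm) f fun x hx =>
    h x fun i => by simpa using hx (e i)
  exact ⟨μ ∘ e, fun i => hμ (e i), (e.sum_comp _).symm.trans (by simp)⟩

theorem exists_nonneg_multipliers_of_isMinOn {a : ι → Dual 𝕜 V} {β : ι → 𝕜} {f : Dual 𝕜 V}
    {x₀ : V} (hx₀ : ∀ i, β i ≤ a i x₀) (hmin : IsMinOn f {x | ∀ i, β i ≤ a i x} x₀) :
    ∃ μ : ι → 𝕜, 0 ≤ μ ∧ f = ∑ i, μ i • a i ∧ ∀ i, μ i * (a i x₀ - β i) = 0 := by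
  let fst := LinearMap.fst 𝕜 V 𝕜
  let snd := LinearMap.snd 𝕜 V 𝕜
  let a' : Option ι → Dual 𝕜 (V × 𝕜) := fun o => o.elim snd fun i => a i ∘ₗ fst - β i • snd
  -- Homogenize: if `t ≥ 0` and `t β ≤ a x`, then `(t + 1)⁻¹ • (x + x₀)` is feasible.
  have h : ∀ p, (∀ o, 0 ≤ a' o p) → 0 ≤ (f ∘ₗ fst - f x₀ • snd) p := by
    rintro ⟨x, t⟩ hp
    have ht : 0 < t + 1 := by linarith [show 0 ≤ t from hp none]
    have hy : (t + 1)⁻¹ • (x + x₀) ∈ {x | ∀ i, β i ≤ a i x} := fun i => by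
      have : 0 ≤ a i x - β i * t := hp (some i)
      rw [map_smul, map_add, smul_eq_mul, le_inv_mul_iff₀ ht]
      linarith [hx₀ i]
    have := isMinOn_iff.mp hmin _ hy
    rw [map_smul, map_add, smul_eq_mul, le_inv_mul_iff₀ ht] at this
    show 0 ≤ f x - f x₀ * t
    linarith
  obtain ⟨μ, hμ, hf⟩ := exists_nonneg_sum_of_forall_nonneg a' _ h
  have hval : ∀ x t, f x - f x₀ * t = μ none * t + ∑ i, μ (some i) * (a i x - β i * t) :=
    fun x t => by simpa [a', fst, snd, Fintype.sum_option] using congrArg (· (x, t)) hf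
  have hterm : ∀ i, 0 ≤ μ (some i) * (a i x₀ - β i) :=
    fun i => mul_nonneg (hμ _) (sub_nonneg.mpr (hx₀ i))
  have hslack : ∑ i, μ (some i) * (a i x₀ - β i) = 0 := by
    have := hval x₀ 1
    simp only [sub_self, mul_one] at this
    linarith [show (0 : 𝕜) ≤ μ none from hμ none,
      Finset.sum_nonneg fun i (_ : i ∈ Finset.univ) => hterm i]
  refine ⟨μ ∘ some, fun i => hμ _, LinearMap.ext fun x => by simpa using hval x 0, fun i => ?_⟩
  exact (Finset.sum_eq_zero_iff_of_nonneg fun i _ => hterm i).mp hslack i (Finset.mem_univ i)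

end Module.Dual

namespace QuadraticProgram

open Filter Topology

variable {ι κ : Type*} [Fintype ι]
  (Q : Matrix ι ι ℝ) (A : Matrix κ ι ℝ) (c : ι → ℝ) (b : κ → ℝ)

def objective (x : ι → ℝ) : ℝ := x ⬝ᵥ Q *ᵥ x + c ⬝ᵥ x

def feasibleSet : Set (ι → ℝ) := {x | b ≤ A *ᵥ x ∧ 0 ≤ x}

theorem convex_feasibleSet : Convex ℝ (feasibleSet A b) :=
  ((convex_Ici b).linear_preimage A.mulVecLin).inter (convex_Ici 0)

variable [Fintype κ]

def lagrangianGradient (x : ι → ℝ) (u : κ → ℝ) : ι → ℝ := (2 • Q) *ᵥ x + c - Aᵀ *ᵥ u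

structure IsKKTPoint (x : ι → ℝ) (u : κ → ℝ) : Prop where
  feasible : x ∈ feasibleSet A b
  dual_nonneg : 0 ≤ u
  gradient_nonneg : 0 ≤ lagrangianGradient Q A c x u
  gradient_dotProduct : lagrangianGradient Q A c x u ⬝ᵥ x = 0
  slack_dotProduct : (A *ᵥ x - b) ⬝ᵥ u = 0

variable {Q A c b}

theorem objective_add (hQ : Q.IsSymm) (x h : ι → ℝ) :
    objective Q c (x + h) = objective Q c x + ((2 • Q) *ᵥ x + c) ⬝ᵥ h + h ⬝ᵥ Q *ᵥ h := by
  have hsymm : x ⬝ᵥ Q *ᵥ h = h ⬝ᵥ Q *ᵥ x := by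
    rw [dotProduct_mulVec, ← mulVec_transpose, hQ.eq, dotProduct_comm]
  simp only [objective, two_smul, add_mulVec, mulVec_add, add_dotProduct, dotProduct_add,
    dotProduct_comm (Q *ᵥ x) h, hsymm]
  ring

theorem isMinOn_gradient_of_isMinOn (hQ : Q.IsSymm) {S : Set (ι → ℝ)} (hS : Convex ℝ S)
    {x : ι → ℝ} (hx : x ∈ S) (hmin : IsMinOn (objective Q c) S x) :
    IsMinOn (fun y => ((2 • Q) *ᵥ x + c) ⬝ᵥ y) S x := by
  refine isMinOn_iff.mpr fun y hy => ?_
  obtain ⟨h, rfl⟩ : ∃ h, y = x + h := ⟨y - x, by abel⟩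
  rw [dotProduct_add, le_add_iff_nonneg_right]
  have hpos : ∀ t ∈ Set.Ioc (0 : ℝ) 1, 0 ≤ ((2 • Q) *ᵥ x + c) ⬝ᵥ h + t * (h ⬝ᵥ Q *ᵥ h) := by
    intro t ht
    have := isMinOn_iff.mp hmin _ (hS.add_smul_sub_mem hx hy ⟨ht.1.le, ht.2⟩)
    simp only [add_sub_cancel_left, objective_add hQ, mulVec_smul, dotProduct_smul,
      smul_dotProduct, smul_eq_mul] at this
    nlinarith [ht.1]
  have hlim : Tendsto (fun t : ℝ => ((2 • Q) *ᵥ x + c) ⬝ᵥ h + t * (h ⬝ᵥ Q *ᵥ h)) (𝓝[>] 0)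
      (𝓝 (((2 • Q) *ᵥ x + c) ⬝ᵥ h)) := by
    refine tendsto_nhdsWithin_of_tendsto_nhds ?_
    simpa using ((continuous_mul_const (h ⬝ᵥ Q *ᵥ h)).tendsto 0).const_add _
  exact ge_of_tendsto hlim (Filter.mem_of_superset (Ioc_mem_nhdsGT zero_lt_one) hpos)

theorem IsKKTPoint.isMinOn (hQ : Q.IsSymm) (hpsd : ∀ z, 0 ≤ z ⬝ᵥ Q *ᵥ z) {x : ι → ℝ}
    {u : κ → ℝ} (hkkt : IsKKTPoint Q A c b x u) : IsMinOn (objective Q c) (feasibleSet A b) x := by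
  refine isMinOn_iff.mpr fun y ⟨hAy, hy⟩ => ?_
  obtain ⟨h, rfl⟩ : ∃ h, y = x + h := ⟨y - x, by abel⟩
  have hgrad : ((2 • Q) *ᵥ x + c) ⬝ᵥ h
      = lagrangianGradient Q A c x u ⬝ᵥ (x + h) + (A *ᵥ (x + h) - b) ⬝ᵥ u
        - (A *ᵥ x - b) ⬝ᵥ u := by
    have hL := hkkt.gradient_dotProduct
    have hA : (Aᵀ *ᵥ u) ⬝ᵥ h = (A *ᵥ h) ⬝ᵥ u := by
      rw [mulVec_transpose, dotProduct_comm (A *ᵥ h), dotProduct_mulVec]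
    simp only [lagrangianGradient, sub_dotProduct, dotProduct_add, mulVec_add,
      add_dotProduct] at hL ⊢
    linarith
  have := dotProduct_nonneg_of_nonneg hkkt.gradient_nonneg hy
  have := dotProduct_nonneg_of_nonneg (sub_nonneg.mpr hAy) hkkt.dual_nonneg
  rw [objective_add hQ, hgrad, hkkt.slack_dotProduct]
  linarith [hpsd h]

theorem exists_isKKTPoint_of_isMinOn (hQ : Q.IsSymm) {x : ι → ℝ} (hx : x ∈ feasibleSet A b)
    (hmin : IsMinOn (objective Q c) (feasibleSet A b) x) : ∃ u, IsKKTPoint Q A c b x u := by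
  let a : κ ⊕ ι → Module.Dual ℝ (ι → ℝ) :=
    Sum.elim (fun j => LinearMap.proj j ∘ₗ A.mulVecLin) LinearMap.proj
  have hS : feasibleSet A b = {y | ∀ k, Sum.elim b 0 k ≤ a k y} := by
    ext y
    simp [feasibleSet, a, Pi.le_def]
  obtain ⟨μ, hμ, hf, hslack⟩ := Module.Dual.exists_nonneg_multipliers_of_isMinOn
    (f := dotProductBilin ℝ ℝ ((2 • Q) *ᵥ x + c)) (hS ▸ hx)
    (hS ▸ isMinOn_gradient_of_isMinOn hQ (convex_feasibleSet A b) hx hmin)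
  have hgrad : lagrangianGradient Q A c x (μ ∘ Sum.inl) = μ ∘ Sum.inr := by
    have hdot : ∀ y, ((2 • Q) *ᵥ x + c) ⬝ᵥ y = (Aᵀ *ᵥ (μ ∘ Sum.inl) + μ ∘ Sum.inr) ⬝ᵥ y := by
      intro y
      rw [add_dotProduct (Aᵀ *ᵥ _), mulVec_transpose, ← dotProduct_mulVec]
      simpa [a, Fintype.sum_sum_type, dotProduct, add_mul, Finset.sum_add_distrib]
        using congrArg (· y) hf
    rw [lagrangianGradient, dotProduct_eq _ _ hdot, add_sub_cancel_left]
  refine ⟨μ ∘ Sum.inl, hx, fun j => hμ _, hgrad ▸ fun i => hμ _, ?_, ?_⟩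
  · rw [hgrad]
    exact Finset.sum_eq_zero fun i _ => by simpa [a] using hslack (Sum.inr i)
  · exact Finset.sum_eq_zero fun j _ => by simpa [a, mul_comm] using hslack (Sum.inl j)

theorem lcp_solution_iff {x : ι → ℝ} {u : κ → ℝ} {w : ι ⊕ κ → ℝ} :
    (w - fromBlocks (2 • Q) (-Aᵀ) A 0 *ᵥ Sum.elim x u = Sum.elim c (-b) ∧ 0 ≤ w ∧
        0 ≤ Sum.elim x u ∧ w ⬝ᵥ Sum.elim x u = 0) ↔
      w = Sum.elim (lagrangianGradient Q A c x u) (A *ᵥ x - b) ∧ IsKKTPoint Q A c b x u := by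
  have hw : w - fromBlocks (2 • Q) (-Aᵀ) A 0 *ᵥ Sum.elim x u = Sum.elim c (-b) ↔
      w = Sum.elim (lagrangianGradient Q A c x u) (A *ᵥ x - b) := by
    rw [sub_eq_iff_eq_add, fromBlocks_mulVec]
    simp only [Sum.elim_comp_inl, Sum.elim_comp_inr, zero_mulVec, add_zero, neg_mulVec,
      ← Sum.elim_add_add, lagrangianGradient]
    exact iff_of_eq (congrArg _ (congrArg₂ _ (by abel) (by abel)))
  have hnonneg : ∀ f : ι → ℝ, ∀ g : κ → ℝ, 0 ≤ Sum.elim f g ↔ 0 ≤ f ∧ 0 ≤ g :=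
    fun _ _ => Sum.forall
  rw [hw, hnonneg]
  constructor
  · rintro ⟨rfl, hw, ⟨hx, hu⟩, hwz⟩
    rw [hnonneg, sub_nonneg] at hw
    rw [sumElim_dotProduct_sumElim] at hwz
    have := dotProduct_nonneg_of_nonneg hw.1 hx
    have := dotProduct_nonneg_of_nonneg (sub_nonneg.mpr hw.2) hu
    exact ⟨rfl, ⟨hw.2, hx⟩, hu, hw.1, by linarith, by linarith⟩
  · rintro ⟨rfl, hkkt⟩
    refine ⟨rfl, (hnonneg _ _).mpr ⟨hkkt.gradient_nonneg, sub_nonneg.mpr hkkt.feasible.1⟩,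
      ⟨hkkt.feasible.2, hkkt.dual_nonneg⟩, ?_⟩
    rw [sumElim_dotProduct_sumElim, hkkt.gradient_dotProduct, hkkt.slack_dotProduct, add_zero]

theorem exists_lcp_solution_of_isMinOn (hQ : Q.IsSymm) {x : ι → ℝ} (hx : x ∈ feasibleSet A b)
    (hmin : IsMinOn (objective Q c) (feasibleSet A b) x) :
    ∃ w z : ι ⊕ κ → ℝ, w - fromBlocks (2 • Q) (-Aᵀ) A 0 *ᵥ z = Sum.elim c (-b) ∧ 0 ≤ w ∧
      0 ≤ z ∧ w ⬝ᵥ z = 0 := by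
  obtain ⟨u, hkkt⟩ := exists_isKKTPoint_of_isMinOn hQ hx hmin
  exact ⟨_, _, lcp_solution_iff.mpr ⟨rfl, hkkt⟩⟩

theorem isMinOn_of_lcp_solution (hQ : Q.IsSymm) (hpsd : ∀ z, 0 ≤ z ⬝ᵥ Q *ᵥ z)
    {w z : ι ⊕ κ → ℝ} (h₁ : w - fromBlocks (2 • Q) (-Aᵀ) A 0 *ᵥ z = Sum.elim c (-b))
    (h₂ : 0 ≤ w) (h₃ : 0 ≤ z) (h₄ : w ⬝ᵥ z = 0) :
    z ∘ Sum.inl ∈ feasibleSet A b ∧ IsMinOn (objective Q c) (feasibleSet A b) (z ∘ Sum.inl) := by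
  rw [← Sum.elim_comp_inl_inr z] at h₁ h₃ h₄
  obtain ⟨-, hkkt⟩ := lcp_solution_iff.mp ⟨h₁, h₂, h₃, h₄⟩
  exact ⟨hkkt.feasible, hkkt.isMinOn hQ hpsd⟩

end QuadraticProgram

theorem qp_lcp_equivalence (n m : ℕ) (Q : Matrix (Fin n) (Fin n) ℝ)
    (hQsym : Q.IsSymm) (hQ : ∀ z : Fin n → ℝ, 0 ≤ z ⬝ᵥ Q *ᵥ z)
    (A : Matrix (Fin m) (Fin n) ℝ) (c : Fin n → ℝ) (b : Fin m → ℝ)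
    (M : Matrix (Fin n ⊕ Fin m) (Fin n ⊕ Fin m) ℝ)
    (hM : M = Matrix.fromBlocks (2 • Q) (-Aᵀ) A 0)
    (q : Fin n ⊕ Fin m → ℝ) (hq : q = Sum.elim c (-b)) :
    ((∃ x : Fin n → ℝ, (∀ i, b i ≤ (A *ᵥ x) i) ∧ (∀ i, 0 ≤ x i) ∧
        ∀ x' : Fin n → ℝ, (∀ i, b i ≤ (A *ᵥ x') i) → (∀ i, 0 ≤ x' i) →
          x ⬝ᵥ Q *ᵥ x + c ⬝ᵥ x ≤ x' ⬝ᵥ Q *ᵥ x' + c ⬝ᵥ x')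
      ↔
      (∃ w z : Fin n ⊕ Fin m → ℝ, w - M *ᵥ z = q ∧
        (∀ i, 0 ≤ w i) ∧ (∀ i, 0 ≤ z i) ∧ w ⬝ᵥ z = 0))
    ∧
    (∀ w z : Fin n ⊕ Fin m → ℝ, w - M *ᵥ z = q →
      (∀ i, 0 ≤ w i) → (∀ i, 0 ≤ z i) → w ⬝ᵥ z = 0 →
      (let x := fun i => z (Sum.inl i)
       (∀ i, b i ≤ (A *ᵥ x) i) ∧ (∀ i, 0 ≤ x i) ∧
        ∀ x' : Fin n → ℝ, (∀ i, b i ≤ (A *ᵥ x') i) → (∀ i, 0 ≤ x' i) →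
          x ⬝ᵥ Q *ᵥ x + c ⬝ᵥ x ≤ x' ⬝ᵥ Q *ᵥ x' + c ⬝ᵥ x')) := by
  subst hM hq
  refine ⟨⟨fun ⟨x, hAx, hx, hopt⟩ => ?_, fun ⟨w, z, h₁, h₂, h₃, h₄⟩ => ?_⟩,
    fun w z h₁ h₂ h₃ h₄ => ?_⟩
  · exact QuadraticProgram.exists_lcp_solution_of_isMinOn hQsym ⟨hAx, hx⟩
      (isMinOn_iff.mpr fun y hy => hopt y hy.1 hy.2)
  · obtain ⟨⟨hAx, hx⟩, hmin⟩ := QuadraticProgram.isMinOn_of_lcp_solution hQsym hQ h₁ h₂ h₃ h₄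
    exact ⟨_, hAx, hx, fun y hAy hy => isMinOn_iff.mp hmin y ⟨hAy, hy⟩⟩
  · obtain ⟨⟨hAx, hx⟩, hmin⟩ := QuadraticProgram.isMinOn_of_lcp_solution hQsym hQ h₁ h₂ h₃ h₄
    exact ⟨hAx, hx, fun y hAy hy => isMinOn_iff.mp hmin y ⟨hAy, hy⟩⟩
end

section
/- If (w₁, z₁) and (w₂, z₂) are both solutions of the LCP w - Mz = q, w, z ≥ 0, wᵀz = 0 with M positive semidefinite (not necessarily symmetric), then w₁ᵀz₂ + w₂ᵀz₁ = -(z₁ - z₂)ᵀM(z₁ - z₂) ≤ 0, hence w₁ᵀz₂ + w₂ᵀz₁ = 0, (z₁ - z₂)ᵀM(z₁ - z₂) = 0, and therefore w₁ᵀz₂ = w₂ᵀz₁ = 0. -/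
open Matrix

theorem lcp_cross_complementarity (k : ℕ) (M : Matrix (Fin k) (Fin k) ℝ)
    (hM : ∀ z : Fin k → ℝ, 0 ≤ z ⬝ᵥ M *ᵥ z) (q : Fin k → ℝ)
    (w₁ z₁ w₂ z₂ : Fin k → ℝ)
    (h₁ : w₁ = q + M *ᵥ z₁) (h₁w : ∀ i, 0 ≤ w₁ i) (h₁z : ∀ i, 0 ≤ z₁ i)
    (h₁c : w₁ ⬝ᵥ z₁ = 0)
    (h₂ : w₂ = q + M *ᵥ z₂) (h₂w : ∀ i, 0 ≤ w₂ i) (h₂z : ∀ i, 0 ≤ z₂ i)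
    (h₂c : w₂ ⬝ᵥ z₂ = 0) :
    (z₁ - z₂) ⬝ᵥ M *ᵥ (z₁ - z₂) = 0 ∧
    w₁ ⬝ᵥ z₂ + w₂ ⬝ᵥ z₁ = -((z₁ - z₂) ⬝ᵥ M *ᵥ (z₁ - z₂)) ∧
    w₁ ⬝ᵥ z₂ + w₂ ⬝ᵥ z₁ = 0 ∧
    w₁ ⬝ᵥ z₂ = 0 ∧ w₂ ⬝ᵥ z₁ = 0 := by
  have hMv : M *ᵥ (z₁ - z₂) = w₁ - w₂ := by
    rw [mulVec_sub, h₁, h₂]; abel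
  have key : (z₁ - z₂) ⬝ᵥ M *ᵥ (z₁ - z₂) = -(w₁ ⬝ᵥ z₂ + w₂ ⬝ᵥ z₁) := by
    rw [hMv, sub_dotProduct, dotProduct_sub, dotProduct_sub,
      dotProduct_comm z₁ w₁, dotProduct_comm z₁ w₂, dotProduct_comm z₂ w₁,
      dotProduct_comm z₂ w₂, h₁c, h₂c]
    ring
  have hq : 0 ≤ (z₁ - z₂) ⬝ᵥ M *ᵥ (z₁ - z₂) := hM _
  have hn1 : 0 ≤ w₁ ⬝ᵥ z₂ :=
    Finset.sum_nonneg fun i _ => mul_nonneg (h₁w i) (h₂z i)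
  have hn2 : 0 ≤ w₂ ⬝ᵥ z₁ :=
    Finset.sum_nonneg fun i _ => mul_nonneg (h₂w i) (h₁z i)
  have hqz : (z₁ - z₂) ⬝ᵥ M *ᵥ (z₁ - z₂) = 0 := by linarith
  refine ⟨hqz, by linarith, by linarith, by linarith, by linarith⟩
end

section
/- (Convexity of LCP solution set for PSD matrices, Adler–Gale) For a positive semidefinite matrix M and fixed q, the set of vectors z ≥ 0 such that (q + Mz, z) solves the LCP (i.e., q + Mz ≥ 0 and zᵀ(q + Mz) = 0) is convex. -/
/-!
If `x` and `y` solve the LCP, the two cross terms `xᵀ(q + My)` and `yᵀ(q + Mx)` are nonnegative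
and sum to `-(x - y)ᵀM(x - y) ≤ 0`, so both vanish. On the segment from `x` to `y` the slack
`q + Mz` is affine, and `zᵀ(q + Mz)` expands into the four pairings of `x, y` with their slacks,
all of which are zero.
-/

open Matrix

namespace Matrix

variable {ι 𝕜 : Type*} [Fintype ι]

def lcpSolutionSet [CommRing 𝕜] [LE 𝕜] (M : Matrix ι ι 𝕜) (q : ι → 𝕜) : Set (ι → 𝕜) :=
  {z | 0 ≤ z ∧ 0 ≤ q + M *ᵥ z ∧ z ⬝ᵥ (q + M *ᵥ z) = 0}

theorem dotProduct_add_mulVec_cross [CommRing 𝕜] (M : Matrix ι ι 𝕜) (q x y : ι → 𝕜) :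
    x ⬝ᵥ (q + M *ᵥ y) + y ⬝ᵥ (q + M *ᵥ x) =
      x ⬝ᵥ (q + M *ᵥ x) + y ⬝ᵥ (q + M *ᵥ y) - (x - y) ⬝ᵥ M *ᵥ (x - y) := by
  simp only [dotProduct_add, mulVec_sub, sub_dotProduct, dotProduct_sub]
  ring

theorem add_mulVec_combo [CommRing 𝕜] (M : Matrix ι ι 𝕜) (q x y : ι → 𝕜) {a b : 𝕜}
    (hab : a + b = 1) :
    q + M *ᵥ (a • x + b • y) = a • (q + M *ᵥ x) + b • (q + M *ᵥ y) := by
  rw [mulVec_add, mulVec_smul, mulVec_smul, smul_add, smul_add,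
    ← add_assoc, add_add_add_comm, ← add_smul, hab, one_smul]
  abel

variable [CommRing 𝕜] [LinearOrder 𝕜] [IsStrictOrderedRing 𝕜] {M : Matrix ι ι 𝕜} {q x y : ι → 𝕜}

theorem dotProduct_add_mulVec_eq_zero_of_mem_lcpSolutionSet
    (hM : ∀ z, 0 ≤ z ⬝ᵥ M *ᵥ z) (hx : x ∈ lcpSolutionSet M q) (hy : y ∈ lcpSolutionSet M q) :
    x ⬝ᵥ (q + M *ᵥ y) = 0 := by
  obtain ⟨hx0, hxw, hxc⟩ := hx
  obtain ⟨hy0, hyw, hyc⟩ := hy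
  have hsum := dotProduct_add_mulVec_cross M q x y
  rw [hxc, hyc] at hsum
  have hxy := dotProduct_nonneg_of_nonneg hx0 hyw
  have hyx := dotProduct_nonneg_of_nonneg hy0 hxw
  linarith [hM (x - y)]

theorem convex_lcpSolutionSet (hM : ∀ z, 0 ≤ z ⬝ᵥ M *ᵥ z) (q : ι → 𝕜) :
    Convex 𝕜 (lcpSolutionSet M q) := by
  intro x hx y hy a b ha hb hab
  have hxy := dotProduct_add_mulVec_eq_zero_of_mem_lcpSolutionSet hM hx hy
  have hyx := dotProduct_add_mulVec_eq_zero_of_mem_lcpSolutionSet hM hy hx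
  obtain ⟨hx0, hxw, hxc⟩ := hx
  obtain ⟨hy0, hyw, hyc⟩ := hy
  refine ⟨add_nonneg (smul_nonneg ha hx0) (smul_nonneg hb hy0), ?_, ?_⟩ <;>
    rw [add_mulVec_combo M q x y hab]
  · exact add_nonneg (smul_nonneg ha hxw) (smul_nonneg hb hyw)
  · rw [add_dotProduct, dotProduct_add, dotProduct_add]
    simp only [smul_dotProduct, dotProduct_smul, hxc, hyc, hxy, hyx, smul_zero, add_zero]

end Matrix

theorem lcp_solution_set_convex (k : ℕ) (M : Matrix (Fin k) (Fin k) ℝ)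
    (hM : ∀ z : Fin k → ℝ, 0 ≤ z ⬝ᵥ M *ᵥ z) (q : Fin k → ℝ) :
    Convex ℝ {z : Fin k → ℝ | (∀ i, 0 ≤ z i) ∧ (∀ i, 0 ≤ (q + M *ᵥ z) i) ∧
      z ⬝ᵥ (q + M *ᵥ z) = 0} :=
  convex_lcpSolutionSet hM q
end

section
/- (Infeasibility certificate, case (a) of the criss-cross method) Let M ∈ ℝ^{k×k}, q ∈ ℝ^k, and let B ⊆ {1,…,k} be a basis with dictionary Λ = -M_B^{-1} M_N and basic values λ* = M_B^{-1} q. If there exists a row index r with λ*_r < 0 and Λ_{r,j} ≤ 0 for all j, then the LCP w - Mz = q, w ≥ 0, z ≥ 0, wᵀz = 0 has no solution; in fact, there is no pair (w, z) with w - Mz = q and w, z ≥ 0. -/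
open Matrix

/-- The basis matrix `M_B`: column `j` is the `j`-th identity column if `j ∈ B`,
and the `j`-th column of `-M` otherwise. -/
def basisMat {k : ℕ} (M : Matrix (Fin k) (Fin k) ℝ) (B : Finset (Fin k)) :
    Matrix (Fin k) (Fin k) ℝ :=
  Matrix.of fun i j => if j ∈ B then (if i = j then (1 : ℝ) else 0) else -M i j

/-- The complementary matrix `M_N`: column `j` is `-M_j` if `j ∈ B`, `I_j` otherwise. -/
def complMat {k : ℕ} (M : Matrix (Fin k) (Fin k) ℝ) (B : Finset (Fin k)) :
    Matrix (Fin k) (Fin k) ℝ :=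
  Matrix.of fun i j => if j ∈ B then -M i j else (if i = j then (1 : ℝ) else 0)

/-!
Every solution of `w - M z = q` satisfies `λ_B = λ* + Λ λ_N`. If `w, z ≥ 0` then `λ_B, λ_N ≥ 0`,
so row `r` reads `0 ≤ λ_B r = λ*_r + ∑_j Λ_{rj} λ_N j ≤ λ*_r`, contradicting `λ*_r < 0`.
-/

/-- `λ_B` collects `w_j` for `j ∈ B` and `z_j` otherwise; `λ_N` is the complementary choice. -/
theorem basisMat_mulVec_add_complMat_mulVec {k : ℕ} (M : Matrix (Fin k) (Fin k) ℝ)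
    (B : Finset (Fin k)) (w z : Fin k → ℝ) :
    basisMat M B *ᵥ B.piecewise w z + complMat M B *ᵥ B.piecewise z w = w - M *ᵥ z := by
  have hcol : ∀ i j, basisMat M B i j * B.piecewise w z j + complMat M B i j * B.piecewise z w j
      = (if i = j then w j else 0) - M i j * z j := by
    intro i j
    by_cases hj : j ∈ B <;> simp [basisMat, complMat, hj] <;> ring
  ext i
  simp only [Pi.add_apply, Pi.sub_apply, mulVec, dotProduct, ← Finset.sum_add_distrib, hcol,
    Finset.sum_sub_distrib, Finset.sum_ite_eq, Finset.mem_univ, if_true]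

theorem eq_inv_mulVec_add_of_mulVec_add_mulVec_eq {n p : Type*} [Fintype n] [DecidableEq n]
    [Fintype p] {K : Type*} [CommRing K] {A : Matrix n n K} {C : Matrix n p K}
    (hA : IsUnit A.det) {x q : n → K} {y : p → K}
    (h : A *ᵥ x + C *ᵥ y = q) : x = A⁻¹ *ᵥ q + (-(A⁻¹ * C)) *ᵥ y := by
  rw [← h, mulVec_add, mulVec_mulVec, nonsing_inv_mul _ hA, one_mulVec, neg_mulVec,
    ← mulVec_mulVec, add_neg_cancel_right]

theorem nonneg_of_eq_add_mulVec_of_row_nonpos {m n : Type*} [Fintype n] {K : Type*}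
    [CommRing K] [LinearOrder K] [IsStrictOrderedRing K] {Λ : Matrix m n K} {x c : m → K}
    {y : n → K} (h : x = c + Λ *ᵥ y) (hy : 0 ≤ y) {r : m} (hx : 0 ≤ x r)
    (hrow : ∀ j, Λ r j ≤ 0) : 0 ≤ c r := by
  have hsum : Λ r ⬝ᵥ y ≤ 0 :=
    Finset.sum_nonpos fun j _ => mul_nonpos_of_nonpos_of_nonneg (hrow j) (hy j)
  have hxr : x r = c r + Λ r ⬝ᵥ y := by rw [h]; rfl
  linarith

theorem crisscross_infeasibility_certificate (k : ℕ)
    (M : Matrix (Fin k) (Fin k) ℝ) (q : Fin k → ℝ) (B : Finset (Fin k))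
    (hB : IsUnit (basisMat M B).det)
    (Λ : Matrix (Fin k) (Fin k) ℝ) (hΛ : Λ = -((basisMat M B)⁻¹ * complMat M B))
    (lam : Fin k → ℝ) (hlam : lam = (basisMat M B)⁻¹ *ᵥ q)
    (r : Fin k) (hr : lam r < 0) (hrow : ∀ j, Λ r j ≤ 0) :
    ¬ ∃ w z : Fin k → ℝ, w - M *ᵥ z = q ∧ (∀ i, 0 ≤ w i) ∧ (∀ i, 0 ≤ z i) := by
  rintro ⟨w, z, hq, hw, hz⟩
  have hdict : B.piecewise w z = lam + Λ *ᵥ B.piecewise z w := by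
    rw [hΛ, hlam]
    exact eq_inv_mulVec_add_of_mulVec_add_mulVec_eq hB
      ((basisMat_mulVec_add_complMat_mulVec M B w z).trans hq)
  have hN : 0 ≤ B.piecewise z w := B.le_piecewise_of_le_of_le hz hw
  exact hr.not_ge (nonneg_of_eq_add_mulVec_of_row_nonpos hdict hN
    (B.le_piecewise_of_le_of_le hw hz r) hrow)
end

section
/- (Basis update lemma, diagonal pivot) Let M ∈ ℝ^{k×k}, B a basis (M_B invertible), Λ = -M_B^{-1}M_N the dictionary. If p ∈ [k] satisfies Λ_{pp} ≠ 0, then B' = B Δ {p} (symmetric difference) is again a basis, i.e., M_{B'} is invertible; indeed M_{B'} = M_B T where T agrees with the identity except column p equals -Λ_p, and det(T) = -Λ_{pp} ≠ 0. -/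
open Matrix

/-! Toggling `p` in `B` swaps column `p` of `M_B` with column `p` of `M_N`; pivoting on
`Λ_pp` is the column operation that produces this swap. -/

theorem basisMat_symmDiff_singleton {k : ℕ} (M : Matrix (Fin k) (Fin k) ℝ)
    (B : Finset (Fin k)) (p : Fin k) :
    basisMat M (symmDiff B {p}) = (basisMat M B).updateCol p fun i => complMat M B i p := by
  ext i j
  obtain rfl | hj := eq_or_ne j p
  · by_cases hjB : j ∈ B <;> simp [basisMat, complMat, Finset.mem_symmDiff, hjB]
  · by_cases hjB : j ∈ B <;> simp [basisMat, Finset.mem_symmDiff, hjB, hj]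

theorem Matrix.det_one_updateCol {n R : Type*} [Fintype n] [DecidableEq n] [CommRing R]
    (j : n) (v : n → R) : ((1 : Matrix n n R).updateCol j v).det = v j := by
  rw [← cramer_apply, cramer_one]
  rfl

theorem Matrix.mulVec_col_inv_mul_cancel {n R : Type*} [Fintype n] [DecidableEq n] [CommRing R]
    {A : Matrix n n R} (hA : IsUnit A.det) (C : Matrix n n R) (j : n) :
    (A *ᵥ fun i => (A⁻¹ * C) i j) = fun i => C i j := by
  funext i
  exact congrFun (congrFun (mul_nonsing_inv_cancel_left A C hA) i) j

theorem diagonal_pivot_basis_update (k : ℕ)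
    (M : Matrix (Fin k) (Fin k) ℝ) (B : Finset (Fin k))
    (hB : IsUnit (basisMat M B).det)
    (Λ : Matrix (Fin k) (Fin k) ℝ) (hΛ : Λ = -((basisMat M B)⁻¹ * complMat M B))
    (p : Fin k) (hp : Λ p p ≠ 0)
    (T : Matrix (Fin k) (Fin k) ℝ)
    (hT : T = Matrix.of fun i j =>
      if j = p then -Λ i p else (if i = j then (1 : ℝ) else 0)) :
    basisMat M (symmDiff B {p}) = basisMat M B * T ∧
    T.det = -Λ p p ∧
    IsUnit (basisMat M (symmDiff B {p})).det := by
  have hT_updateCol : T = (1 : Matrix (Fin k) (Fin k) ℝ).updateCol p fun i => -Λ i p := by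
    subst hT
    ext i j
    by_cases hj : j = p <;> simp [one_apply, hj]
  have hΛ_col : (fun i => -Λ i p) = fun i => ((basisMat M B)⁻¹ * complMat M B) i p := by
    simp [hΛ]
  have hmul : basisMat M (symmDiff B {p}) = basisMat M B * T := by
    rw [hT_updateCol, mul_updateCol, mul_one, hΛ_col, mulVec_col_inv_mul_cancel hB,
      basisMat_symmDiff_singleton]
  have hdet : T.det = -Λ p p := by
    rw [hT_updateCol, det_one_updateCol]
  refine ⟨hmul, hdet, ?_⟩
  rw [hmul, det_mul, hdet]
  exact hB.mul (neg_ne_zero.mpr hp).isUnit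
end

section
/- (Piecewise linearity of the solution path) Suppose q(μ) = q₀ + μ q₁ and suppose that for each μ in an interval [μ_min, μ_max] there is a basis B(μ) from a finite collection ℬ of bases of M whose basic solution λ*_{B(μ)}(μ) = M_{B(μ)}^{-1} q(μ) is nonnegative. Then [μ_min, μ_max] can be partitioned into finitely many closed subintervals on each of which a single basis B ∈ ℬ is valid; on each such subinterval the map μ ↦ λ*_B(μ) is affine in μ. Hence the solution path defined by selecting, on each subinterval, the basic solution of its basis, is piecewise affine with at most |ℬ| pieces. -/
/-!
On each validity set `{μ | 0 ≤ M_B⁻¹ q(μ)}` the basic solution `M_B⁻¹ q₀ + μ M_B⁻¹ q₁` is affine,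
so the validity set is a closed interval. A cover of `[μmin, μmax]` by finitely many closed
intervals is walked from left to right: take an interval containing the current left end point
and jump to its right end `c`. The other intervals still cover `(c, μmax]`, hence by closedness
`[c, μmax]`, so the used interval can be discarded and each interval is used at most once.
-/

open Matrix

open Set

section Partition

variable {ι : Type*}

def IsSubordinatePartition (V : ι → Set ℝ) (s : Finset ι) (a b : ℝ) (l : ℕ) (pts : ℕ → ℝ)
    (sel : ℕ → ι) : Prop :=
  pts 0 = a ∧ pts l = b ∧
    ∀ j < l, pts j ≤ pts (j + 1) ∧ sel j ∈ s ∧ Icc (pts j) (pts (j + 1)) ⊆ V (sel j)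

theorem isSubordinatePartition_zero (V : ι → Set ℝ) (s : Finset ι) (b : ℝ) (sel : ℕ → ι) :
    IsSubordinatePartition V s b b 0 (fun _ => b) sel :=
  ⟨rfl, rfl, fun _ h => absurd h (Nat.not_lt_zero _)⟩

theorem IsSubordinatePartition.cons [DecidableEq ι] {V : ι → Set ℝ} {s : Finset ι} {a c b : ℝ}
    {l : ℕ} {pts : ℕ → ℝ} {sel : ℕ → ι} {i : ι}
    (h : IsSubordinatePartition V s c b l pts sel) (hac : a ≤ c) (hi : Icc a c ⊆ V i) :
    IsSubordinatePartition V (insert i s) a b (l + 1)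
      (fun | 0 => a | j + 1 => pts j) (fun | 0 => i | j + 1 => sel j) := by
  obtain ⟨h0, hl, hpieces⟩ := h
  refine ⟨rfl, hl, fun j hj => ?_⟩
  rcases j with _ | j
  · refine ⟨?_, Finset.mem_insert_self i s, ?_⟩ <;> simpa only [zero_add, h0]
  · obtain ⟨hmono, hsel, hsub⟩ := hpieces j (Nat.lt_of_succ_lt_succ hj)
    exact ⟨hmono, Finset.mem_insert_of_mem hsel, hsub⟩

theorem exists_isSubordinatePartition_of_cover {V : ι → Set ℝ} (hclosed : ∀ i, IsClosed (V i))
    (hconn : ∀ i, (V i).OrdConnected) (s : Finset ι) {a b : ℝ} (hab : a ≤ b)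
    (hcover : Icc a b ⊆ ⋃ i ∈ s, V i) :
    ∃ l, 0 < l ∧ l ≤ s.card ∧ ∃ pts sel, IsSubordinatePartition V s a b l pts sel := by
  classical
  induction s using Finset.strongInduction generalizing a with
  | H s ih =>
  obtain ⟨i, hi, hai⟩ := mem_iUnion₂.1 (hcover ⟨le_rfl, hab⟩)
  have hcompact : IsCompact (V i ∩ Icc a b) := isCompact_Icc.inter_left (hclosed i)
  set c := sSup (V i ∩ Icc a b)
  have hc : c ∈ V i ∩ Icc a b := hcompact.sSup_mem ⟨a, hai, le_rfl, hab⟩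
  have hrest : ∃ l ≤ (s.erase i).card, ∃ pts sel,
      IsSubordinatePartition V (s.erase i) c b l pts sel := by
    rcases hc.2.2.eq_or_lt with hcb | hcb
    · rw [hcb]
      exact ⟨0, Nat.zero_le _, _, _, isSubordinatePartition_zero V _ b fun _ => i⟩
    have hright : Ioc c b ⊆ ⋃ j ∈ s.erase i, V j := fun μ hμ => by
      obtain ⟨j, hj, hμj⟩ := mem_iUnion₂.1 (hcover ⟨hc.2.1.trans hμ.1.le, hμ.2⟩)
      refine mem_iUnion₂.2 ⟨j, Finset.mem_erase.2 ⟨?_, hj⟩, hμj⟩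
      rintro rfl
      exact hμ.1.not_ge (le_csSup hcompact.bddAbove ⟨hμj, hc.2.1.trans hμ.1.le, hμ.2⟩)
    have hclosure : Icc c b ⊆ ⋃ j ∈ s.erase i, V j := by
      rw [← closure_Ioc hcb.ne]
      exact closure_minimal hright (isClosed_biUnion_finset fun j _ => hclosed j)
    obtain ⟨l, -, hl, hpart⟩ := ih _ (Finset.erase_ssubset hi) hcb.le hclosure
    exact ⟨l, hl, hpart⟩
  obtain ⟨l, hl, pts, sel, hpart⟩ := hrest
  have hcons := hpart.cons hc.2.1 ((hconn i).out hai hc.1)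
  rw [Finset.insert_erase hi] at hcons
  exact ⟨l + 1, Nat.succ_pos l, Finset.card_erase_add_one hi ▸ Nat.succ_le_succ hl, _, _, hcons⟩

end Partition

section Affine

variable {ι : Type*}

theorem isClosed_setOf_nonneg_add_smul (u v : ι → ℝ) : IsClosed {μ : ℝ | 0 ≤ u + μ • v} :=
  isClosed_le continuous_const (by fun_prop)

theorem ordConnected_setOf_nonneg_add_smul (u v : ι → ℝ) :
    {μ : ℝ | 0 ≤ u + μ • v}.OrdConnected := by
  refine ⟨fun x hx y hy z hz i => ?_⟩
  have hx := hx i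
  have hy := hy i
  simp only [Pi.zero_apply, Pi.add_apply, Pi.smul_apply, smul_eq_mul] at hx hy ⊢
  rcases le_total 0 (v i) with hv | hv
  · nlinarith [mul_le_mul_of_nonneg_right hz.1 hv]
  · nlinarith [mul_le_mul_of_nonpos_right hz.2 hv]

end Affine

theorem piecewise_linear_solution_path_general (k : ℕ)
    (M : Matrix (Fin k) (Fin k) ℝ) (ℬ : Finset (Finset (Fin k)))
    (q₀ q₁ : Fin k → ℝ) (μmin μmax : ℝ) (hle : μmin ≤ μmax)
    (hcover : ∀ μ ∈ Set.Icc μmin μmax, ∃ B ∈ ℬ,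
      ∀ i, 0 ≤ ((basisMat M B)⁻¹ *ᵥ (q₀ + μ • q₁)) i) :
    ∃ (l : ℕ) (pts : ℕ → ℝ) (Bsel : ℕ → Finset (Fin k)),
      0 < l ∧ l ≤ ℬ.card ∧ pts 0 = μmin ∧ pts l = μmax ∧
      (∀ j < l, pts j ≤ pts (j + 1)) ∧
      (∀ j < l, Bsel j ∈ ℬ ∧
        (∀ μ ∈ Set.Icc (pts j) (pts (j + 1)),
          ∀ i, 0 ≤ ((basisMat M (Bsel j))⁻¹ *ᵥ (q₀ + μ • q₁)) i) ∧
        (∃ u v : Fin k → ℝ, ∀ μ : ℝ,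
          (basisMat M (Bsel j))⁻¹ *ᵥ (q₀ + μ • q₁) = u + μ • v)) := by
  have hsol (B : Finset (Fin k)) (μ : ℝ) : (basisMat M B)⁻¹ *ᵥ (q₀ + μ • q₁) =
      (basisMat M B)⁻¹ *ᵥ q₀ + μ • (basisMat M B)⁻¹ *ᵥ q₁ := by
    rw [mulVec_add, mulVec_smul]
  let valid (B : Finset (Fin k)) : Set ℝ :=
    {μ | 0 ≤ (basisMat M B)⁻¹ *ᵥ q₀ + μ • (basisMat M B)⁻¹ *ᵥ q₁}
  have hvalid_cover : Icc μmin μmax ⊆ ⋃ B ∈ ℬ, valid B := fun μ hμ => by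
    obtain ⟨B, hB, hμB⟩ := hcover μ hμ
    rw [hsol] at hμB
    exact mem_iUnion₂.2 ⟨B, hB, hμB⟩
  obtain ⟨l, hl, hlcard, pts, Bsel, h0, hl', hpieces⟩ :=
    exists_isSubordinatePartition_of_cover (fun _ => isClosed_setOf_nonneg_add_smul _ _)
      (fun _ => ordConnected_setOf_nonneg_add_smul _ _) ℬ hle hvalid_cover
  refine ⟨l, pts, Bsel, hl, hlcard, h0, hl', fun j hj => (hpieces j hj).1, fun j hj => ?_⟩
  obtain ⟨-, hB, hsub⟩ := hpieces j hj
  exact ⟨hB, fun μ hμ => hsol (Bsel j) μ ▸ hsub hμ, _, _, hsol (Bsel j)⟩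

theorem piecewise_linear_solution_path (k : ℕ)
    (M : Matrix (Fin k) (Fin k) ℝ) (ℬ : Finset (Finset (Fin k)))
    (hbases : ∀ B ∈ ℬ, IsUnit (basisMat M B).det)
    (q₀ q₁ : Fin k → ℝ) (μmin μmax : ℝ) (hle : μmin ≤ μmax)
    (hcover : ∀ μ ∈ Set.Icc μmin μmax, ∃ B ∈ ℬ,
      ∀ i, 0 ≤ ((basisMat M B)⁻¹ *ᵥ (q₀ + μ • q₁)) i) :
    ∃ (l : ℕ) (pts : ℕ → ℝ) (Bsel : ℕ → Finset (Fin k)),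
      0 < l ∧ l ≤ ℬ.card ∧ pts 0 = μmin ∧ pts l = μmax ∧
      (∀ j < l, pts j ≤ pts (j + 1)) ∧
      (∀ j < l, Bsel j ∈ ℬ ∧
        (∀ μ ∈ Set.Icc (pts j) (pts (j + 1)),
          ∀ i, 0 ≤ ((basisMat M (Bsel j))⁻¹ *ᵥ (q₀ + μ • q₁)) i) ∧
        (∃ u v : Fin k → ℝ, ∀ μ : ℝ,
          (basisMat M (Bsel j))⁻¹ *ᵥ (q₀ + μ • q₁) = u + μ • v)) :=
  piecewise_linear_solution_path_general k M ℬ q₀ q₁ μmin μmax hle hcover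
end
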